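/- Let H be Hermitian with spectrum in compact 𝓔 ⊂ ℝ, z ∉ 𝓔, δ = dist(z,𝓔), and E with ‖E‖₂ < δ. Then for all entries (i,j), |((H−zI)^{-1} − (H+E−zI)^{-1})(i,j)| ≤ ∑_{ĩ,j̃} |(H−zI)^{-1}(i,ĩ)|·|E(ĩ,j̃)|·|(H−zI)^{-1}(j̃,j)| + δ^{-2}‖E‖₂²/(δ − ‖E‖₂). -/

import Mathlib

/-!
Write `R = (H - z)⁻¹`. Iterating the first resolvent identity gives the second-order expansion
`R - (H + E - z)⁻¹ = R E R - R E R E (H + E - z)⁻¹`. The first term is bounded entrywise by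
expanding the matrix product; the remainder is bounded in operator norm, which dominates every
entry. Since `H - z` is normal, the continuous functional calculus gives `‖R‖ ≤ δ⁻¹`, and the
first resolvent identity then gives `‖(H + E - z)⁻¹‖ ≤ (δ - ‖E‖)⁻¹`.
-/

open scoped Ring

section Ring

variable {R : Type*} [Ring R] {a e : R}

theorem Ring.inverse_sub_inverse_add (ha : IsUnit a) (hae : IsUnit (a + e)) :
    a⁻¹ʳ - (a + e)⁻¹ʳ = a⁻¹ʳ * e * (a + e)⁻¹ʳ := by
  rw [Ring.inverse_sub_inverse (iff_of_true ha hae), add_sub_cancel_left]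

theorem Ring.inverse_sub_inverse_add_eq_second_order (ha : IsUnit a) (hae : IsUnit (a + e)) :
    a⁻¹ʳ - (a + e)⁻¹ʳ = a⁻¹ʳ * e * a⁻¹ʳ - a⁻¹ʳ * e * a⁻¹ʳ * e * (a + e)⁻¹ʳ := by
  have first_order := Ring.inverse_sub_inverse_add ha hae
  calc a⁻¹ʳ - (a + e)⁻¹ʳ = a⁻¹ʳ * e * (a⁻¹ʳ - (a⁻¹ʳ - (a + e)⁻¹ʳ)) := by
        rw [sub_sub_cancel, first_order]
    _ = _ := by rw [first_order]; noncomm_ring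

end Ring

section NormedRing

variable {R : Type*} [NormedRing R] [CompleteSpace R] {a e : R} {δ : ℝ}

theorem isUnit_add_of_norm_lt (ha : IsUnit a) (hR : ‖a⁻¹ʳ‖ ≤ δ⁻¹) (he : ‖e‖ < δ) :
    IsUnit (a + e) := by
  have hδ : 0 < δ := (norm_nonneg e).trans_lt he
  have hsmall : ‖-(a⁻¹ʳ * e)‖ < 1 :=
    calc ‖-(a⁻¹ʳ * e)‖ ≤ δ⁻¹ * ‖e‖ := (norm_neg _).trans_le (norm_mul_le_of_le hR le_rfl)
      _ < δ⁻¹ * δ := by gcongr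
      _ = 1 := inv_mul_cancel₀ hδ.ne'
  have hunit : IsUnit (1 + a⁻¹ʳ * e) := by simpa using (Units.oneSub _ hsmall).isUnit
  convert ha.mul hunit using 1
  rw [mul_add, mul_one, ← mul_assoc, Ring.mul_inverse_cancel a ha, one_mul]

theorem norm_ringInverse_add_le (ha : IsUnit a) (hR : ‖a⁻¹ʳ‖ ≤ δ⁻¹) (he : ‖e‖ < δ) :
    ‖(a + e)⁻¹ʳ‖ ≤ (δ - ‖e‖)⁻¹ := by
  have hδ : 0 < δ := (norm_nonneg e).trans_lt he
  have first_order := Ring.inverse_sub_inverse_add ha (isUnit_add_of_norm_lt ha hR he)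
  set r := ‖(a + e)⁻¹ʳ‖
  have hr : r ≤ δ⁻¹ + δ⁻¹ * ‖e‖ * r :=
    calc r = ‖a⁻¹ʳ - a⁻¹ʳ * e * (a + e)⁻¹ʳ‖ := by rw [← first_order, sub_sub_cancel]
      _ ≤ ‖a⁻¹ʳ‖ + ‖a⁻¹ʳ * e * (a + e)⁻¹ʳ‖ := norm_sub_le _ _
      _ ≤ δ⁻¹ + δ⁻¹ * ‖e‖ * r :=
        add_le_add hR (norm_mul_le_of_le (norm_mul_le_of_le hR le_rfl) le_rfl)
  rw [inv_eq_one_div, le_div_iff₀ (sub_pos.mpr he)]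
  have := mul_le_mul_of_nonneg_left hr hδ.le
  rw [mul_add, ← mul_assoc, ← mul_assoc, mul_inv_cancel₀ hδ.ne', one_mul] at this
  linarith

theorem norm_ringInverse_sub_ringInverse_add_sub_le (ha : IsUnit a) (hR : ‖a⁻¹ʳ‖ ≤ δ⁻¹)
    (he : ‖e‖ < δ) :
    ‖a⁻¹ʳ - (a + e)⁻¹ʳ - a⁻¹ʳ * e * a⁻¹ʳ‖ ≤ δ⁻¹ ^ 2 * ‖e‖ ^ 2 / (δ - ‖e‖) := by
  rw [Ring.inverse_sub_inverse_add_eq_second_order ha (isUnit_add_of_norm_lt ha hR he),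
    sub_sub_cancel_left, norm_neg]
  calc ‖a⁻¹ʳ * e * a⁻¹ʳ * e * (a + e)⁻¹ʳ‖ ≤ δ⁻¹ * ‖e‖ * δ⁻¹ * ‖e‖ * (δ - ‖e‖)⁻¹ :=
        norm_mul_le_of_le (norm_mul_le_of_le (norm_mul_le_of_le (norm_mul_le_of_le hR le_rfl)
          hR) le_rfl) (norm_ringInverse_add_le ha hR he)
    _ = δ⁻¹ ^ 2 * ‖e‖ ^ 2 / (δ - ‖e‖) := by ring

end NormedRing

theorem IsStarNormal.norm_ringInverse_sub_algebraMap_le {A : Type*} [CStarAlgebra A] {a : A}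
    [IsStarNormal a] {z : ℂ} {δ : ℝ} (hδ : 0 < δ) (h : ∀ μ ∈ spectrum ℂ a, δ ≤ ‖μ - z‖) :
    ‖(a - algebraMap ℂ A z)⁻¹ʳ‖ ≤ δ⁻¹ := by
  have hne : ∀ μ ∈ spectrum ℂ a, μ - z ≠ 0 := fun μ hμ h0 => by
    simpa [h0] using (h μ hμ).trans_lt' hδ
  rw [← cfc_id' ℂ a, ← cfc_const z a, ← cfc_sub .., ← cfc_inv _ a hne]
  refine norm_cfc_le (by positivity) fun μ hμ => ?_
  rw [norm_inv]
  exact inv_anti₀ hδ (h μ hμ)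

namespace Matrix

variable {m n 𝕜 : Type*} [Fintype m] [Fintype n] [RCLike 𝕜]

theorem norm_mul_mul_apply_le {α : Type*} [NormedRing α] (A B C : Matrix n n α) (i j : n) :
    ‖(A * B * C) i j‖ ≤ ∑ k, ∑ l, ‖A i k‖ * ‖B k l‖ * ‖C l j‖ := by
  calc ‖(A * B * C) i j‖ = ‖∑ l, ∑ k, A i k * B k l * C l j‖ := by
        simp only [mul_apply, Finset.sum_mul]
    _ ≤ ∑ l, ∑ k, ‖A i k * B k l * C l j‖ :=
        (norm_sum_le _ _).trans (Finset.sum_le_sum fun _ _ => norm_sum_le _ _)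
    _ ≤ ∑ l, ∑ k, ‖A i k‖ * ‖B k l‖ * ‖C l j‖ := by gcongr; exact norm_mul₃_le
    _ = ∑ k, ∑ l, ‖A i k‖ * ‖B k l‖ * ‖C l j‖ := Finset.sum_comm

open scoped Matrix.Norms.L2Operator

theorem norm_apply_le_l2_opNorm [DecidableEq n] (A : Matrix m n 𝕜) (i : m) (j : n) :
    ‖A i j‖ ≤ ‖A‖ := by
  calc ‖A i j‖ = ‖(EuclideanSpace.equiv m 𝕜).symm (A *ᵥ EuclideanSpace.single j 1) i‖ := by
        simp [mulVec_single]
    _ ≤ ‖(EuclideanSpace.equiv m 𝕜).symm (A *ᵥ EuclideanSpace.single j 1)‖ :=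
        PiLp.norm_apply_le _ i
    _ ≤ ‖A‖ := by simpa using A.l2_opNorm_mulVec (EuclideanSpace.single j 1)

theorem IsHermitian.norm_inv_sub_smul_one_le [DecidableEq n] {H : Matrix n n ℂ}
    (hH : H.IsHermitian) {z : ℂ} {δ : ℝ} (hδ : 0 < δ)
    (h : ∀ μ ∈ spectrum ℂ H, δ ≤ ‖μ - z‖) : ‖(H - z • 1)⁻¹‖ ≤ δ⁻¹ := by
  have := hH.isSelfAdjoint.isStarNormal
  rw [nonsing_inv_eq_ringInverse, ← Algebra.algebraMap_eq_smul_one]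
  exact IsStarNormal.norm_ringInverse_sub_algebraMap_le hδ h

theorem norm_inv_sub_inv_add_apply_le [DecidableEq n] {M E : Matrix n n 𝕜} {δ : ℝ}
    (hM : IsUnit M) (hR : ‖M⁻¹‖ ≤ δ⁻¹) (hE : ‖E‖ < δ) (i j : n) :
    ‖(M⁻¹ - (M + E)⁻¹) i j‖ ≤
      ∑ k, ∑ l, ‖M⁻¹ i k‖ * ‖E k l‖ * ‖M⁻¹ l j‖ + δ⁻¹ ^ 2 * ‖E‖ ^ 2 / (δ - ‖E‖) := by
  have remainder := norm_ringInverse_sub_ringInverse_add_sub_le hM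
    (by rwa [← nonsing_inv_eq_ringInverse]) hE
  simp only [← nonsing_inv_eq_ringInverse] at remainder
  calc ‖(M⁻¹ - (M + E)⁻¹) i j‖
      ≤ ‖(M⁻¹ * E * M⁻¹) i j‖ + ‖(M⁻¹ - (M + E)⁻¹ - M⁻¹ * E * M⁻¹) i j‖ := by
        rw [sub_apply (M⁻¹ - (M + E)⁻¹)]
        exact norm_le_insert' _ _
    _ ≤ _ := add_le_add (norm_mul_mul_apply_le _ _ _ i j)
        ((norm_apply_le_l2_opNorm _ i j).trans remainder)

end Matrix

/-- Entrywise a-posteriori perturbation bound for the resolvent: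
for `H` Hermitian with spectrum in compact `𝓔 ⊂ ℝ`, `z ∉ 𝓔`, `δ = dist(z,𝓔)`,
and `‖E‖₂ < δ`, every entry satisfies
`|((H−zI)⁻¹ − (H+E−zI)⁻¹)(i,j)| ≤ ∑_{ĩ,j̃} |(H−zI)⁻¹(i,ĩ)|·|E(ĩ,j̃)|·|(H−zI)⁻¹(j̃,j)|
 + δ⁻²‖E‖₂²/(δ − ‖E‖₂)`. -/
theorem resolvent_perturbation_entry_bound {n : ℕ} (H : Matrix (Fin n) (Fin n) ℂ)
    (hH : H.IsHermitian) (𝓔 : Set ℝ) (hcompact : IsCompact 𝓔) (hne : 𝓔.Nonempty)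
    (hspec : spectrum ℂ H ⊆ Complex.ofReal '' 𝓔)
    (z : ℂ) (hz : z ∉ Complex.ofReal '' 𝓔)
    (E : Matrix (Fin n) (Fin n) ℂ)
    (hE : ‖Matrix.toEuclideanCLM (𝕜 := ℂ) E‖ < Metric.infDist z (Complex.ofReal '' 𝓔)) :
    ∀ i j : Fin n,
      ‖((H - z • 1)⁻¹ - (H + E - z • 1)⁻¹) i j‖ ≤
        (∑ it : Fin n, ∑ jt : Fin n,
          ‖(H - z • 1)⁻¹ i it‖ * ‖E it jt‖ * ‖(H - z • 1)⁻¹ jt j‖) +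
        (Metric.infDist z (Complex.ofReal '' 𝓔))⁻¹ ^ 2 *
          ‖Matrix.toEuclideanCLM (𝕜 := ℂ) E‖ ^ 2 /
          (Metric.infDist z (Complex.ofReal '' 𝓔) -
            ‖Matrix.toEuclideanCLM (𝕜 := ℂ) E‖) := by
  intro i j
  set δ := Metric.infDist z (Complex.ofReal '' 𝓔)
  have hδ : 0 < δ := ((hcompact.image Complex.continuous_ofReal).isClosed.notMem_iff_infDist_pos
    (hne.image _)).mp hz
  have hdist : ∀ μ ∈ spectrum ℂ H, δ ≤ ‖μ - z‖ := fun μ hμ => by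
    simpa [dist_eq_norm'] using Metric.infDist_le_dist_of_mem (x := z) (hspec hμ)
  have hunit : IsUnit (H - z • 1) := by
    have := (spectrum.notMem_iff.mp fun hμ => hz (hspec hμ)).neg
    rwa [neg_sub, Algebra.algebraMap_eq_smul_one] at this
  rw [show H + E - z • 1 = H - z • 1 + E by abel]
  exact Matrix.norm_inv_sub_inv_add_apply_le hunit (hH.norm_inv_sub_smul_one_le hδ hdist) hE i j
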